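/- Let G be a finite connected simple graph with maximum degree Δ(G) ≥ 2, minimum degree δ(G), and order n(G). Then the zero forcing number satisfies Z(G) = F_1(G) ≤ ((Δ(G) − 2)·n(G) − (Δ(G) − δ(G)) + 2) / (Δ(G) − 1). -/

import Mathlib

/-!
Colour the closed neighbourhood `N[u]` of a vertex of minimum degree `δ`; this costs `δ` vertices,
since `u` forces its last neighbour. Then extend greedily: as long as some coloured vertex `u` has
uncoloured neighbours `W`, colour all of `W` but one, which `u` then forces. Every coloured vertex
keeps a coloured neighbour, so `#W ≤ Δ - 1`, and each step pays at most `(Δ - 2) / (Δ - 1)` per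
newly coloured vertex. Summing, `(Δ - 1) Z ≤ (Δ - 1) δ + (Δ - 2) (n - δ - 1)`.
-/

/-- One step of the `k`-forcing color change process: a colored vertex (in `S`)
with at most `k` non-colored neighbors causes all of its neighbors to become colored. -/
def kStep {V : Type*} [Fintype V] [DecidableEq V] (G : SimpleGraph V) [DecidableRel G.Adj]
    (k : ℕ) (S : Finset V) : Finset V :=
  S ∪ Finset.univ.filter (fun v => ∃ u ∈ S, G.Adj u v ∧ (G.neighborFinset u \ S).card ≤ k)

/-- `S` is a `k`-forcing set if iterating the color change rule starting from `S`
eventually colors all vertices of `G`. -/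
def IsKForcingSet {V : Type*} [Fintype V] [DecidableEq V] (G : SimpleGraph V)
    [DecidableRel G.Adj] (k : ℕ) (S : Finset V) : Prop :=
  ∃ n : ℕ, (kStep G k)^[n] S = Finset.univ

/-- The `k`-forcing number `F_k(G)`: the minimum cardinality of a `k`-forcing set. -/
noncomputable def kForcingNumber {V : Type*} [Fintype V] [DecidableEq V] (G : SimpleGraph V)
    [DecidableRel G.Adj] (k : ℕ) : ℕ :=
  sInf {m | ∃ S : Finset V, S.card = m ∧ IsKForcingSet G k S}

/-- The zero forcing number `Z(G) = F_1(G)`. -/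
noncomputable def zeroForcingNumber {V : Type*} [Fintype V] [DecidableEq V]
    (G : SimpleGraph V) [DecidableRel G.Adj] : ℕ :=
  kForcingNumber G 1

lemma Nat.sub_one_mul_sub_one_le_sub_two_mul {d m : ℕ} (hm : 1 ≤ m) (hmd : m + 1 ≤ d) :
    (d - 1) * (m - 1) ≤ (d - 2) * m := by
  obtain ⟨e, rfl⟩ := Nat.exists_eq_add_of_le hmd
  obtain ⟨m, rfl⟩ := Nat.exists_eq_add_of_le' hm
  simp only [Nat.add_sub_cancel]
  rw [show m + 1 + 1 + e - 1 = m + 1 + e by omega, show m + 1 + 1 + e - 2 = m + e by omega]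
  nlinarith

section

open Finset

variable {V : Type*} [Fintype V] [DecidableEq V] {G : SimpleGraph V} [DecidableRel G.Adj]

variable (G) in
lemma subset_kStep (k : ℕ) (S : Finset V) : S ⊆ kStep G k S :=
  subset_union_left

variable (G) in
lemma kStep_monotone (k : ℕ) : Monotone (kStep G k) := by
  intro S T hST
  refine union_subset_union hST fun v hv => ?_
  simp only [mem_filter, mem_univ, true_and] at hv ⊢
  obtain ⟨u, hu, hadj, hcard⟩ := hv
  exact ⟨u, hST hu, hadj, (card_le_card (sdiff_subset_sdiff le_rfl hST)).trans hcard⟩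

lemma union_subset_kStep_union {k : ℕ} {A B : Finset V} (h : A ⊆ kStep G k B) (T : Finset V) :
    A ∪ T ⊆ kStep G k (B ∪ T) :=
  union_subset (h.trans (kStep_monotone G k subset_union_left))
    (subset_union_right.trans (subset_kStep G k _))

lemma IsKForcingSet.of_subset_kStep {k : ℕ} {S T : Finset V} (hT : T ⊆ kStep G k S)
    (h : IsKForcingSet G k T) : IsKForcingSet G k S := by
  obtain ⟨n, hn⟩ := h
  refine ⟨n + 1, eq_univ_of_forall fun v => ?_⟩
  rw [Function.iterate_succ_apply]
  exact (kStep_monotone G k).iterate n hT (hn ▸ mem_univ v)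

lemma kForcingNumber_le_card {k : ℕ} {S : Finset V} (h : IsKForcingSet G k S) :
    kForcingNumber G k ≤ #S :=
  Nat.sInf_le ⟨S, rfl, h⟩

lemma neighborFinset_subset_kStep {k : ℕ} {S : Finset V} {u : V} (hu : u ∈ S)
    (h : #(G.neighborFinset u \ S) ≤ k) : G.neighborFinset u ⊆ kStep G k S := fun v hv =>
  mem_union_right _ <| mem_filter.mpr ⟨mem_univ v, u, hu, (G.mem_neighborFinset u v).mp hv, h⟩

lemma union_neighborFinset_subset_kStep_one {C : Finset V} {u : V} (hu : u ∈ C) (w : V) :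
    C ∪ G.neighborFinset u ⊆ kStep G 1 (C ∪ (G.neighborFinset u).erase w) := by
  have hsingleton : G.neighborFinset u \ (C ∪ (G.neighborFinset u).erase w) ⊆ {w} := by
    intro z hz
    simp only [mem_sdiff, mem_union, mem_erase, not_or, not_and] at hz
    exact mem_singleton.mpr (by_contra fun hzw => hz.2.2 hzw hz.1)
  refine union_subset (subset_union_left.trans (subset_kStep G 1 _))
    (neighborFinset_subset_kStep (mem_union_left _ hu) ?_)
  simpa using card_le_card hsingleton

lemma SimpleGraph.card_neighborFinset_sdiff_add_one_le_maxDegree {C : Finset V} {u x : V}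
    (hx : x ∈ C) (hadj : G.Adj u x) : #(G.neighborFinset u \ C) + 1 ≤ G.maxDegree := by
  have hlt : #(G.neighborFinset u \ C) < G.degree u := by
    rw [← card_neighborFinset_eq_degree]
    exact card_lt_card ⟨sdiff_subset, fun h => (mem_sdiff.mp
      (h ((G.mem_neighborFinset u x).mpr hadj))).2 hx⟩
  exact hlt.trans_le (G.degree_le_maxDegree u)

omit [DecidableEq V] [DecidableRel G.Adj] in
lemma SimpleGraph.Preconnected.exists_adj_notMem (hG : G.Preconnected) {C : Finset V}
    (hne : C.Nonempty) (hC : C ≠ univ) : ∃ u ∈ C, ∃ v ∉ C, G.Adj u v := by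
  obtain ⟨a, ha⟩ := hne
  obtain ⟨b, -, hb⟩ := exists_of_ssubset (ssubset_univ_iff.mpr hC)
  obtain ⟨p⟩ := hG a b
  obtain ⟨d, -, hd, hd'⟩ := p.exists_boundary_dart (C : Set V) ha hb
  exact ⟨d.fst, hd, d.snd, hd', d.adj⟩

theorem SimpleGraph.Preconnected.exists_isKForcingSet_one_union (hG : G.Preconnected)
    (C : Finset V) (hne : C.Nonempty)
    (hC : ∀ v ∈ C, ∃ x ∈ C, G.Adj v x) :
    ∃ T : Finset V, IsKForcingSet G 1 (C ∪ T) ∧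
      (G.maxDegree - 1) * #T ≤ (G.maxDegree - 2) * #Cᶜ := by
  induction hn : #Cᶜ using Nat.strong_induction_on generalizing C with
  | _ n ih =>
  by_cases huniv : C = univ
  · exact ⟨∅, ⟨0, by simp [huniv]⟩, by simp⟩
  obtain ⟨u, hu, v, hv, huv⟩ := hG.exists_adj_notMem hne huniv
  obtain ⟨x, hx, hux⟩ := hC u hu
  obtain ⟨W, hW⟩ : ∃ W, W = G.neighborFinset u \ C := ⟨_, rfl⟩
  have hvW : v ∈ W := hW ▸ mem_sdiff.mpr ⟨(G.mem_neighborFinset u v).mpr huv, hv⟩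
  have hWΔ : #W + 1 ≤ G.maxDegree :=
    hW ▸ SimpleGraph.card_neighborFinset_sdiff_add_one_le_maxDegree hx hux
  have hcompl : #(C ∪ W)ᶜ + #W = #Cᶜ := by
    have hdisj : Disjoint C W := hW ▸ disjoint_sdiff
    have hle := card_le_univ (C ∪ W)
    rw [card_union_of_disjoint hdisj] at hle
    rw [card_compl, card_compl, card_union_of_disjoint hdisj]
    omega
  have hW_pos : 0 < #W := card_pos.mpr ⟨v, hvW⟩
  obtain ⟨T, hT, hTcard⟩ := ih _ (by omega) (C ∪ W) (hne.mono subset_union_left)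
    (by
      intro y hy
      rcases mem_union.mp hy with hy | hy
      · obtain ⟨z, hz, hyz⟩ := hC y hy
        exact ⟨z, mem_union_left _ hz, hyz⟩
      · rw [hW, mem_sdiff, mem_neighborFinset] at hy
        exact ⟨u, mem_union_left _ hu, hy.1.symm⟩)
    rfl
  refine ⟨W.erase v ∪ T, ?_, ?_⟩
  · refine hT.of_subset_kStep ?_
    rw [← union_assoc, hW, ← erase_sdiff_comm, union_sdiff_self_eq_union,
      union_sdiff_self_eq_union]
    exact union_subset_kStep_union (union_neighborFinset_subset_kStep_one hu v) T
  · calc (G.maxDegree - 1) * #(W.erase v ∪ T)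
        ≤ (G.maxDegree - 1) * (#W - 1) + (G.maxDegree - 1) * #T := by
          rw [← mul_add, ← card_erase_of_mem hvW]
          exact Nat.mul_le_mul_left _ (card_union_le _ _)
      _ ≤ (G.maxDegree - 2) * #W + (G.maxDegree - 2) * #(C ∪ W)ᶜ :=
          add_le_add (Nat.sub_one_mul_sub_one_le_sub_two_mul hW_pos hWΔ) hTcard
      _ = (G.maxDegree - 2) * n := by rw [← mul_add, add_comm, hcompl, hn]

theorem SimpleGraph.Preconnected.exists_isKForcingSet_one_card_le (hG : G.Preconnected) {u : V}
    (hu : 0 < G.degree u) :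
    ∃ S : Finset V, IsKForcingSet G 1 S ∧ (G.maxDegree - 1) * #S ≤
      (G.maxDegree - 1) * G.degree u + (G.maxDegree - 2) * (Fintype.card V - (G.degree u + 1)) := by
  obtain ⟨w, hw⟩ : (G.neighborFinset u).Nonempty := card_pos.mp hu
  have hadj (v : V) (hv : v ∈ G.neighborFinset u) : G.Adj u v := (G.mem_neighborFinset u v).mp hv
  obtain ⟨T, hT, hTcard⟩ := hG.exists_isKForcingSet_one_union (insert u (G.neighborFinset u))
    (insert_nonempty _ _) (by
      intro v hv
      rcases mem_insert.mp hv with rfl | hv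
      · exact ⟨w, mem_insert_of_mem hw, hadj w hw⟩
      · exact ⟨u, mem_insert_self _ _, (hadj v hv).symm⟩)
  refine ⟨insert u ((G.neighborFinset u).erase w) ∪ T, hT.of_subset_kStep ?_, ?_⟩
  · simpa only [insert_eq] using
      union_subset_kStep_union (union_neighborFinset_subset_kStep_one (mem_singleton_self u) w) T
  · have hcard : #(insert u ((G.neighborFinset u).erase w) ∪ T) ≤ G.degree u + #T := by
      grw [card_union_le, card_insert_le, card_erase_of_mem hw, card_neighborFinset_eq_degree]
      omega
    have hcompl : #(insert u (G.neighborFinset u))ᶜ = Fintype.card V - (G.degree u + 1) := by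
      rw [card_compl, card_insert_of_notMem (G.notMem_neighborFinset_self u),
        card_neighborFinset_eq_degree]
    rw [hcompl] at hTcard
    calc (G.maxDegree - 1) * #(insert u ((G.neighborFinset u).erase w) ∪ T)
        ≤ (G.maxDegree - 1) * G.degree u + (G.maxDegree - 1) * #T := by
          rw [← mul_add]; exact Nat.mul_le_mul_left _ hcard
      _ ≤ _ := Nat.add_le_add_left hTcard _

end

/-- If `G` is connected with `Δ(G) ≥ 2`, then
`Z(G) = F_1(G) ≤ ((Δ-2)n - (Δ-δ) + 2) / (Δ-1)`. -/
theorem zeroForcingNumber_le {V : Type*} [Fintype V] [DecidableEq V]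
    (G : SimpleGraph V) [DecidableRel G.Adj]
    (hconn : G.Connected) (hΔ : 2 ≤ G.maxDegree) :
    zeroForcingNumber G = kForcingNumber G 1 ∧
    (zeroForcingNumber G : ℝ) ≤
      (((G.maxDegree : ℝ) - 2) * (Fintype.card V) - ((G.maxDegree : ℝ) - G.minDegree) + 2) /
        ((G.maxDegree : ℝ) - 1) := by
  refine ⟨rfl, ?_⟩
  have : Nonempty V := hconn.nonempty
  have : Nontrivial V :=
    Fintype.one_lt_card_iff_nontrivial.mp (by have := G.maxDegree_lt_card_verts; omega)
  obtain ⟨u, hu⟩ := G.exists_minimal_degree_vertex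
  obtain ⟨S, hS, hScard⟩ := hconn.preconnected.exists_isKForcingSet_one_card_le
    (hconn.preconnected.degree_pos_of_nontrivial u)
  have hZ : (G.maxDegree - 1) * zeroForcingNumber G ≤ (G.maxDegree - 1) * G.degree u +
      (G.maxDegree - 2) * (Fintype.card V - (G.degree u + 1)) :=
    (Nat.mul_le_mul_left _ (kForcingNumber_le_card hS)).trans hScard
  have hun : G.degree u + 1 ≤ Fintype.card V := G.degree_lt_card_verts u
  rw [hu, le_div_iff₀ (sub_pos.mpr (by exact_mod_cast hΔ.trans_lt' one_lt_two))]
  have hZR := (Nat.cast_le (α := ℝ)).mpr hZ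
  push_cast [Nat.cast_sub hun, Nat.cast_sub hΔ, Nat.cast_sub (by omega : 1 ≤ G.maxDegree)] at hZR
  linarith
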